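/- arXiv:2511.22981 — 2 statements merged into one kernel-verified Lean document; each statement's English description precedes it below -/
import Mathlib

section
/- The number of maximal chains of a finite poset with d elements is at most ⌊3^(d/3)⌋. -/
/-!
Every maximal chain of a nonempty finite poset of size `d` has a least element `x`, which is
minimal in the poset, and the rest of the chain is a maximal chain of the strict up-set `Ioi x`;
the chain is recovered from `x` and that rest. The up-set `Ioi x` misses all `m` minimal elements,
so by induction there are at most `m * 3 ^ ((d - m) / 3) ≤ 3 ^ (d / 3)` maximal chains, the last
step being `m ≤ 3 ^ (m / 3)`, i.e. `m ^ 3 ≤ 3 ^ m`.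
-/

open Set

theorem Nat.cube_le_three_pow (n : ℕ) : n ^ 3 ≤ 3 ^ n := by
  rcases lt_or_ge n 3 with hn | hn
  · interval_cases n <;> norm_num
  induction n, hn using Nat.le_induction with
  | base => norm_num
  | succ n hn ih =>
    calc (n + 1) ^ 3 ≤ 3 * n ^ 3 := by
          nlinarith [Nat.mul_le_mul_right (n * n) hn, Nat.mul_le_mul_right n hn]
      _ ≤ 3 * 3 ^ n := by omega
      _ = 3 ^ (n + 1) := by ring

/-- False for real `n` near `e`, hence the detour through `n ^ 3 ≤ 3 ^ n`. -/
theorem Nat.cast_le_three_rpow (n : ℕ) : (n : ℝ) ≤ 3 ^ ((n : ℝ) / 3) := by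
  rw [div_eq_mul_inv, Real.rpow_mul (by norm_num), Real.le_rpow_inv_iff_of_pos (by positivity)
    (by positivity) (by norm_num)]
  exact_mod_cast Nat.cube_le_three_pow n

section

variable {α : Type*}

theorem Finset.isMaxChain_coe {r : α → α → Prop} [Finite α] {C : Finset α}
    (hC : IsChain r (C : Set α)) (hmax : ∀ C' : Finset α, IsChain r (C' : Set α) → C ⊆ C' → C = C') :
    IsMaxChain r (C : Set α) := by
  refine ⟨hC, fun t ht hCt => ?_⟩
  lift t to Finset α using t.toFinite
  exact congrArg _ (hmax t ht (by exact_mod_cast hCt))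

instance Flag.finite [LE α] [Finite α] : Finite (Flag α) :=
  Finite.of_injective _ SetLike.coe_injective

theorem Nat.card_Ioi_add_card_isMin_le [Preorder α] [Finite α] (x : α) :
    Nat.card (Ioi x) + Nat.card {y : α // IsMin y} ≤ Nat.card α := by
  rw [← Nat.card_sum]
  refine Nat.card_le_card_of_injective _ (Subtype.val_injective.sumElim Subtype.val_injective ?_)
  rintro ⟨y, hxy⟩ ⟨z, hz⟩ rfl
  exact hxy.not_isMin hz

theorem IsLeast.insert_Ioi_inter [PartialOrder α] {s : Set α} {x : α} (hx : IsLeast s x) :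
    insert x (Ioi x ∩ s) = s := by
  rw [inter_comm, ← inter_insert_of_mem hx.1, Ioi_insert, inter_eq_left]
  exact hx.2

namespace IsMaxChain

variable [PartialOrder α] {s : Set α} {x : α}

theorem isMin_of_isLeast (hs : IsMaxChain (· ≤ ·) s) (hx : IsLeast s x) : IsMin x := by
  intro y hyx
  have hchain : IsChain (· ≤ ·) (insert y s) :=
    hs.isChain.insert fun z hz _ => .inl (hyx.trans (hx.2 hz))
  exact hx.2 (hs.2 hchain (subset_insert y s) ▸ mem_insert y s)

theorem exists_isLeast [Finite α] [Nonempty α] (hs : IsMaxChain (· ≤ ·) s) : ∃ x, IsLeast s x := by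
  obtain ⟨x, hx⟩ := s.toFinite.exists_minimal (hs.nonempty_iff.mp ‹_›)
  refine ⟨x, hx.prop, fun y hy => ?_⟩
  rcases hs.isChain.total hx.prop hy with hxy | hyx
  · exact hxy
  · exact hx.2 hy hyx

theorem preimage_val_Ioi (hs : IsMaxChain (· ≤ ·) s) (hx : IsLeast s x) :
    IsMaxChain (· ≤ ·) (Subtype.val ⁻¹' s : Set (Ioi x)) := by
  refine ⟨hs.isChain.preimage_embedding (OrderEmbedding.subtype _), fun t ht hst => ?_⟩
  have hchain : IsChain (· ≤ ·) (insert x (Subtype.val '' t)) := by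
    refine (ht.image (OrderEmbedding.subtype _)).insert ?_
    rintro _ ⟨y, -, rfl⟩ -
    exact .inl y.2.le
  have hsub : s ⊆ insert x (Subtype.val '' t) := by
    rw [← hx.insert_Ioi_inter, ← Subtype.image_preimage_coe]
    exact insert_subset_insert (image_mono hst)
  refine hst.antisymm fun y hy => ?_
  exact (hs.2 hchain hsub).symm ▸ mem_insert_of_mem x (mem_image_of_mem _ hy)

end IsMaxChain

namespace Flag

variable [PartialOrder α] [Finite α]

theorem card_le_card_sigma_isLeast [Nonempty α] :
    Nat.card (Flag α) ≤ Nat.card (Σ x : {x : α // IsMin x}, {s : Flag α // IsLeast (s : Set α) x}) := by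
  choose least hleast using fun s : Flag α => s.maxChain.exists_isLeast
  refine Nat.card_le_card_of_injective
    (fun s => ⟨⟨least s, s.maxChain.isMin_of_isLeast (hleast s)⟩, s, hleast s⟩) ?_
  intro s t hst
  exact congrArg (fun p => p.2.1) hst

theorem card_isLeast_le_card_Ioi (x : α) :
    Nat.card {s : Flag α // IsLeast (s : Set α) x} ≤ Nat.card (Flag (Ioi x)) := by
  refine Nat.card_le_card_of_injective
    (fun s => ofIsMaxChain _ (s.1.maxChain.preimage_val_Ioi s.2)) fun s t hst => ?_
  have hst := congrArg (fun u : Flag (Ioi x) => Subtype.val '' (u : Set (Ioi x))) hst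
  simp only [coe_ofIsMaxChain, Subtype.image_preimage_coe] at hst
  ext1; ext1
  rw [← s.2.insert_Ioi_inter, ← t.2.insert_Ioi_inter, hst]

theorem card_le_sum_card_Ioi [Nonempty α] [Fintype {x : α // IsMin x}] :
    Nat.card (Flag α) ≤ ∑ x : {x : α // IsMin x}, Nat.card (Flag (Ioi x.1)) :=
  card_le_card_sigma_isLeast.trans <| Nat.card_sigma.trans_le <|
    Finset.sum_le_sum fun x _ => card_isLeast_le_card_Ioi x.1

end Flag

end

theorem Flag.card_le_three_rpow (α : Type*) [PartialOrder α] [Finite α] :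
    (Nat.card (Flag α) : ℝ) ≤ 3 ^ ((Nat.card α : ℝ) / 3) := by
  induction hd : Nat.card α using Nat.strong_induction_on generalizing α with
  | _ d ih =>
  cases isEmpty_or_nonempty α
  · have : Subsingleton (Flag α) := SetLike.coe_injective.subsingleton
    calc (Nat.card (Flag α) : ℝ) ≤ 1 := by exact_mod_cast Finite.card_le_one_iff_subsingleton.mpr this
      _ ≤ _ := Real.one_le_rpow (by norm_num) (by positivity)
  have := Fintype.ofFinite {x : α // IsMin x}
  set m := Nat.card {x : α // IsMin x}
  have hIoi (x : {x : α // IsMin x}) :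
      (Nat.card (Flag (Ioi x.1)) : ℝ) ≤ 3 ^ (((d - m : ℕ) : ℝ) / 3) := by
    have hle := Nat.card_Ioi_add_card_isMin_le x.1
    have hm : 0 < m := Finite.card_pos_iff.mpr ⟨x⟩
    calc _ ≤ 3 ^ ((Nat.card (Ioi x.1) : ℝ) / 3) := ih _ (by omega) _ rfl
      _ ≤ _ := by gcongr <;> [norm_num; omega]
  calc (Nat.card (Flag α) : ℝ) ≤ ∑ x : {x : α // IsMin x}, (Nat.card (Flag (Ioi x.1)) : ℝ) := by
        exact_mod_cast card_le_sum_card_Ioi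
    _ ≤ ∑ _x : {x : α // IsMin x}, 3 ^ (((d - m : ℕ) : ℝ) / 3) := Finset.sum_le_sum fun x _ => hIoi x
    _ = m * 3 ^ (((d - m : ℕ) : ℝ) / 3) := by simp [m, Nat.card_eq_fintype_card]
    _ ≤ 3 ^ ((m : ℝ) / 3) * 3 ^ (((d - m : ℕ) : ℝ) / 3) := by
        gcongr; exact Nat.cast_le_three_rpow m
    _ = 3 ^ ((d : ℝ) / 3) := by
        rw [← Real.rpow_add (by norm_num), Nat.cast_sub (hd ▸ Finite.card_subtype_le _)]
        ring_nf

/-- The number of maximal chains of a finite poset with `d` elements is at most `⌊3^(d/3)⌋`. -/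
theorem stmt_0 {α : Type*} [Fintype α] [PartialOrder α] :
    {C : Finset α | IsChain (· ≤ ·) (C : Set α) ∧
        ∀ C' : Finset α, IsChain (· ≤ ·) (C' : Set α) → C ⊆ C' → C = C'}.ncard
      ≤ ⌊(3 : ℝ) ^ ((Fintype.card α : ℝ) / 3)⌋₊ := by
  set S := {C : Finset α | IsChain (· ≤ ·) (C : Set α) ∧
    ∀ C' : Finset α, IsChain (· ≤ ·) (C' : Set α) → C ⊆ C' → C = C'}
  have hS : S.ncard ≤ Nat.card (Flag α) := by
    rw [← Nat.card_coe_set_eq]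
    refine Nat.card_le_card_of_injective
      (fun C => .ofIsMaxChain _ (Finset.isMaxChain_coe C.2.1 C.2.2)) fun C D hCD => ?_
    exact Subtype.ext (Finset.coe_injective (congrArg (SetLike.coe : Flag α → Set α) hCD))
  refine Nat.le_floor ?_
  calc (S.ncard : ℝ) ≤ Nat.card (Flag α) := by exact_mod_cast hS
    _ ≤ 3 ^ ((Nat.card α : ℝ) / 3) := Flag.card_le_three_rpow α
    _ = 3 ^ ((Fintype.card α : ℝ) / 3) := by rw [Nat.card_eq_fintype_card]
end

section
/- For every natural number d ≥ 17, (1 + 3^(1/3))^d < (7√6/18) · 6^(d/2). -/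
theorem stmt_9 (d : ℕ) (hd : 17 ≤ d) :
    (1 + (3 : ℝ) ^ ((1 : ℝ) / 3)) ^ d <
      (7 * Real.sqrt 6 / 18) * (6 : ℝ) ^ ((d : ℝ) / 2) := by
  set t : ℝ := (3 : ℝ) ^ ((1 : ℝ) / 3) with ht
  have ht0 : (0 : ℝ) ≤ t := Real.rpow_nonneg (by norm_num) _
  have htq : t ≤ 1.44226 := by
    have h3 : t ^ 3 = 3 := by
      rw [ht, ← Real.rpow_natCast ((3 : ℝ) ^ ((1 : ℝ) / 3)) 3,
        ← Real.rpow_mul (by norm_num)]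
      norm_num
    refine le_of_pow_le_pow_left₀ (n := 3) (by norm_num) (by norm_num) ?_
    rw [h3]; norm_num
  have hsq : Real.sqrt 6 ^ 2 = 6 := Real.sq_sqrt (by norm_num)
  have hs0 : (0 : ℝ) ≤ Real.sqrt 6 := Real.sqrt_nonneg 6
  have h6 : (2.449 : ℝ) < Real.sqrt 6 := by nlinarith
  induction d, hd using Nat.le_induction with
  | base =>
    have hE : (6 : ℝ) ^ ((17 : ℝ) / 2) = 6 ^ (8 : ℕ) * Real.sqrt 6 := by
      rw [Real.sqrt_eq_rpow, ← Real.rpow_natCast 6 8,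
        ← Real.rpow_add (by norm_num)]
      norm_num
    have hcast : ((17 : ℕ) : ℝ) = (17 : ℝ) := by norm_num
    rw [hcast, hE]
    have h2 : (7 * Real.sqrt 6 / 18) * ((6 : ℝ) ^ (8 : ℕ) * Real.sqrt 6)
        = 3919104 := by nlinarith
    rw [h2]
    calc (1 + t) ^ 17 ≤ (1 + 1.44226 : ℝ) ^ 17 :=
          pow_le_pow_left₀ (by linarith) (by linarith) 17
      _ < 3919104 := by norm_num
  | succ n hn ih =>
    have hE : (6 : ℝ) ^ ((((n : ℕ) + 1 : ℕ) : ℝ) / 2)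
        = (6 : ℝ) ^ ((n : ℝ) / 2) * Real.sqrt 6 := by
      rw [Real.sqrt_eq_rpow, ← Real.rpow_add (by norm_num)]
      push_cast
      ring_nf
    rw [hE, pow_succ]
    have hlt : 1 + t < Real.sqrt 6 := by linarith
    have hpos : (0 : ℝ) ≤ (1 + t) ^ n := pow_nonneg (by linarith) n
    calc (1 + t) ^ n * (1 + t)
        < (7 * Real.sqrt 6 / 18 * (6 : ℝ) ^ ((n : ℝ) / 2)) * Real.sqrt 6 :=
          mul_lt_mul'' ih hlt hpos (by linarith)
      _ = 7 * Real.sqrt 6 / 18 * ((6 : ℝ) ^ ((n : ℝ) / 2) * Real.sqrt 6) := by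
          ring
end
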